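/- arXiv:2205.00394 — 2 statements merged into one kernel-verified Lean document; each statement's English description precedes it below -/
import Mathlib

section
/- Let X ⊂ ℝⁿ be compact with 0 in its interior, and let f : X → ℝᵈ be continuous with f(0) = 0 and f continuously differentiable on a neighborhood of 0. Let S be a family of continuously differentiable functions N : ℝⁿ → ℝᵈ with the universal approximation property: for every C¹ function g : ℝⁿ → ℝᵈ and every δ > 0, there exists N ∈ S with sup_{x ∈ X} ‖g(x) − N(x)‖₁ < δ and sup_{x ∈ X} ‖Dg(x) − DN(x)‖₁,₁ < δ, where ‖A‖₁,₁ denotes the sum of absolute values of the entries of the matrix A. Then for every ε > 0 there exists N ∈ S such that for all x ∈ X, ‖f(x) − ([Df(0) − DN(0)]x + N(x) − N(0))‖₁ < ε. -/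
/-!
Approximate `f` uniformly on `X` by a `C¹` function `p` (Stone–Weierstrass for the algebra of
restrictions of `C¹` functions) and glue it to `f` near `0` with a bump function `χ`:
`g = p + χ • (f - p)` is `C¹`, agrees with `f` near `0` (so `g 0 = 0` and `Dg 0 = Df 0`), and is
as close to `f` on `X` as `p` is. Writing
`f x - ([Dg 0 - DN 0] x + N x - N 0) = (f - g) x + (g - N) x - (g - N) 0 - [Dg 0 - DN 0] x`,
a network `N` that is `C¹`-close to `g` on `X` makes every term small, the last one because `X` is
bounded.
-/

open Set Filter Topology

section Approximation

variable {E : Type*} [NormedAddCommGroup E] [NormedSpace ℝ E]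

def contDiffRestrictSubalgebra (X : Set E) (k : WithTop ℕ∞) : Subalgebra ℝ C(X, ℝ) where
  carrier := {φ | ∃ g : E → ℝ, ContDiff ℝ k g ∧ ∀ x : X, g x = φ x}
  mul_mem' := by
    rintro φ ψ ⟨g, hg, hgφ⟩ ⟨h, hh, hhψ⟩
    exact ⟨g * h, hg.mul hh, fun x => by simp [hgφ, hhψ]⟩
  add_mem' := by
    rintro φ ψ ⟨g, hg, hgφ⟩ ⟨h, hh, hhψ⟩
    exact ⟨g + h, hg.add hh, fun x => by simp [hgφ, hhψ]⟩
  algebraMap_mem' r := ⟨fun _ => r, contDiff_const, fun _ => rfl⟩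

theorem contDiffRestrictSubalgebra_separatesPoints [SeparatingDual ℝ E] (X : Set E)
    (k : WithTop ℕ∞) : (contDiffRestrictSubalgebra X k).SeparatesPoints := by
  intro x y hxy
  obtain ⟨L, hL⟩ :=
    SeparatingDual.exists_separating_of_ne (R := ℝ) (Subtype.coe_ne_coe.mpr hxy)
  exact ⟨_, ⟨(L : C(E, ℝ)).restrict X, ⟨L, L.contDiff, fun _ => rfl⟩, rfl⟩, hL⟩

theorem exists_contDiff_abs_sub_lt [SeparatingDual ℝ E] {X : Set E} (hX : IsCompact X)
    {f : E → ℝ} (hf : ContinuousOn f X) (k : WithTop ℕ∞) {δ : ℝ} (hδ : 0 < δ) :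
    ∃ g : E → ℝ, ContDiff ℝ k g ∧ ∀ x ∈ X, |f x - g x| < δ := by
  have : CompactSpace X := isCompact_iff_compactSpace.mp hX
  obtain ⟨⟨φ, g, hg, hgφ⟩, hφ⟩ :=
    ContinuousMap.exists_mem_subalgebra_near_continuous_of_separatesPoints _
      (contDiffRestrictSubalgebra_separatesPoints X k) _ hf.domRestrict δ hδ
  refine ⟨g, hg, fun x hx => ?_⟩
  have hφx := hφ ⟨x, hx⟩
  rw [← hgφ] at hφx
  simpa [abs_sub_comm] using hφx

theorem exists_contDiff_sum_abs_sub_lt [SeparatingDual ℝ E] {ι : Type*} [Fintype ι]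
    {X : Set E} (hX : IsCompact X) {f : E → ι → ℝ} (hf : ContinuousOn f X)
    (k : WithTop ℕ∞) {δ : ℝ} (hδ : 0 < δ) :
    ∃ g : E → ι → ℝ, ContDiff ℝ k g ∧ ∀ x ∈ X, ∑ i, |f x i - g x i| < δ := by
  have hδ' : 0 < δ / (Fintype.card ι + 1) := by positivity
  choose g hg hfg using fun i =>
    exists_contDiff_abs_sub_lt hX ((continuous_apply i).comp_continuousOn hf) k hδ'
  refine ⟨fun x i => g i x, contDiff_pi.mpr hg, fun x hx => ?_⟩
  calc ∑ i, |f x i - g i x| ≤ ∑ _i : ι, δ / (Fintype.card ι + 1) :=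
        Finset.sum_le_sum fun i _ => (hfg i x hx).le
    _ = Fintype.card ι / (Fintype.card ι + 1) * δ := by simp [div_mul_eq_mul_div, mul_div_assoc]
    _ < δ := mul_lt_of_lt_one_left hδ ((div_lt_one (by positivity)).mpr (lt_add_one _))

theorem ContDiffOn.contDiff_smul_of_tsupport_subset {F : Type*} [NormedAddCommGroup F]
    [NormedSpace ℝ F] {k : WithTop ℕ∞} {h : E → F} {V : Set E} (hh : ContDiffOn ℝ k h V)
    (hV : IsOpen V) {χ : E → ℝ} (hχ : ContDiff ℝ k χ) (hχV : tsupport χ ⊆ V) :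
    ContDiff ℝ k fun x => χ x • h x := by
  refine contDiff_of_contDiffOn_union_of_isOpen (hχ.contDiffOn.smul hh)
    (contDiffOn_const (c := (0 : F)).congr fun x hx => ?_)
    (compl_subset_iff_union.mp (compl_subset_compl.mpr hχV)) hV (isClosed_tsupport χ).isOpen_compl
  simp [image_eq_zero_of_notMem_tsupport hx]

theorem exists_contDiff_eventuallyEq_sum_abs_sub_lt [SeparatingDual ℝ E] [HasContDiffBump E]
    {ι : Type*} [Fintype ι] {X U : Set E} {a : E} (hX : IsCompact X) {f : E → ι → ℝ}
    (hf : ContinuousOn f X) (hU : U ∈ 𝓝 a) {k : ℕ∞} (hfU : ContDiffOn ℝ k f U)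
    {δ : ℝ} (hδ : 0 < δ) :
    ∃ g : E → ι → ℝ, ContDiff ℝ k g ∧ g =ᶠ[𝓝 a] f ∧
      ∀ x ∈ X, ∑ i, |f x i - g x i| < δ := by
  obtain ⟨p, hp, hfp⟩ := exists_contDiff_sum_abs_sub_lt hX hf k hδ
  obtain ⟨r, hr, hrU⟩ := Metric.nhds_basis_closedBall.mem_iff.mp (interior_mem_nhds.mpr hU)
  let χ : ContDiffBump a := ⟨r / 2, r, half_pos hr, half_lt_self hr⟩
  refine ⟨fun x => p x + χ x • (f x - p x), hp.add ?_, ?_, fun x hx => ?_⟩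
  · exact ((hfU.mono interior_subset).sub hp.contDiffOn).contDiff_smul_of_tsupport_subset
      isOpen_interior χ.contDiff (χ.tsupport_eq.trans_subset hrU)
  · filter_upwards [χ.eventuallyEq_one] with x hx
    simp [hx]
  · refine lt_of_le_of_lt (Finset.sum_le_sum fun i _ => ?_) (hfp x hx)
    have hχ : |1 - χ x| ≤ 1 :=
      abs_le.mpr ⟨by linarith [χ.le_one (x := x)], by linarith [χ.nonneg (x := x)]⟩
    calc |f x i - (p x i + χ x * (f x i - p x i))| = |1 - χ x| * |f x i - p x i| := by
          rw [← abs_mul]; ring_nf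
      _ ≤ |f x i - p x i| := mul_le_of_le_one_left (abs_nonneg _) hχ

end Approximation

section JacobianCorrection

variable {ι κ : Type*} [Fintype ι] [Fintype κ] [DecidableEq κ]

theorem sum_abs_apply_le_norm_mul (L : (κ → ℝ) →ₗ[ℝ] ι → ℝ) (x : κ → ℝ) :
    ∑ i, |L x i| ≤ ‖x‖ * ∑ i, ∑ j, |L (Pi.single j 1) i| := by
  rw [Finset.mul_sum]
  refine Finset.sum_le_sum fun i _ => ?_
  conv_lhs => rw [pi_eq_sum_univ' x]
  simp only [map_sum, map_smul, Finset.sum_apply, Pi.smul_apply, smul_eq_mul, Finset.mul_sum]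
  refine (Finset.abs_sum_le_sum_abs _ _).trans (Finset.sum_le_sum fun j _ => ?_)
  rw [abs_mul]
  exact mul_le_mul_of_nonneg_right ((Real.norm_eq_abs _).symm.trans_le (norm_le_pi_norm x j))
    (abs_nonneg _)

theorem sum_abs_sub_jacobian_correction_le (f g N : (κ → ℝ) → ι → ℝ)
    (A B : (κ → ℝ) →L[ℝ] ι → ℝ) (hg0 : g 0 = 0) (x : κ → ℝ) :
    ∑ i, |f x i - ((A x i - B x i) + N x i - N 0 i)| ≤
      ∑ i, |f x i - g x i| + ∑ i, |g x i - N x i| + ∑ i, |g 0 i - N 0 i| +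
        ‖x‖ * ∑ i, ∑ j, |A (Pi.single j 1) i - B (Pi.single j 1) i| := by
  have hAB := sum_abs_apply_le_norm_mul (A - B).toLinearMap x
  simp only [ContinuousLinearMap.coe_coe, FunLike.coe_sub, Pi.sub_apply] at hAB
  refine le_trans ?_ (add_le_add le_rfl hAB)
  simp only [← Finset.sum_add_distrib]
  refine Finset.sum_le_sum fun i _ => ?_
  have hg0i : g 0 i = 0 := congrFun hg0 i
  calc |f x i - ((A x i - B x i) + N x i - N 0 i)|
      = |(f x i - g x i) + (g x i - N x i) - (g 0 i - N 0 i) - (A x i - B x i)| := by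
        rw [hg0i]; ring_nf
    _ ≤ _ := by
      linarith [abs_sub ((f x i - g x i) + (g x i - N x i) - (g 0 i - N 0 i)) (A x i - B x i),
        abs_sub ((f x i - g x i) + (g x i - N x i)) (g 0 i - N 0 i),
        abs_add_le (f x i - g x i) (g x i - N x i)]

end JacobianCorrection

theorem stmt_2_general {n d : ℕ} (X : Set (Fin n → ℝ)) (hX : IsCompact X)
    (h0 : (0 : Fin n → ℝ) ∈ interior X)
    (f : (Fin n → ℝ) → (Fin d → ℝ))
    (hf : ContinuousOn f X) (hf0 : f 0 = 0)
    (hf1 : ∃ U ∈ nhds (0 : Fin n → ℝ), ContDiffOn ℝ 1 f U)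
    (S : Set ((Fin n → ℝ) → (Fin d → ℝ)))
    (hUA : ∀ g : (Fin n → ℝ) → (Fin d → ℝ), ContDiff ℝ 1 g → ∀ δ > 0,
      ∃ N ∈ S, (∀ x ∈ X, ∑ i, |g x i - N x i| < δ) ∧
        (∀ x ∈ X, ∑ i, ∑ j, |fderiv ℝ g x (Pi.single j 1) i
          - fderiv ℝ N x (Pi.single j 1) i| < δ))
    (ε : ℝ) (hε : 0 < ε) :
    ∃ N ∈ S, ∀ x ∈ X,
      ∑ i, |f x i - ((fderiv ℝ f 0 x i - fderiv ℝ N 0 x i)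
        + N x i - N 0 i)| < ε := by
  obtain ⟨U, hU, hfU⟩ := hf1
  obtain ⟨g, hg, hgf, hfg⟩ :=
    exists_contDiff_eventuallyEq_sum_abs_sub_lt hX hf hU hfU (half_pos hε)
  have hg0 : g 0 = 0 := hgf.self_of_nhds.trans hf0
  have h0X : (0 : Fin n → ℝ) ∈ X := interior_subset h0
  obtain ⟨R, hR, hXR⟩ := hX.isBounded.exists_pos_norm_le
  set δ := ε / (2 * (R + 2)) with hδ
  obtain ⟨N, hNS, hgN, hDgN⟩ := hUA g hg δ (by positivity)
  refine ⟨N, hNS, fun x hx => ?_⟩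
  rw [← hgf.fderiv_eq]
  calc _ ≤ _ := sum_abs_sub_jacobian_correction_le f g N _ _ hg0 x
    _ < ε / 2 + δ + δ + R * δ := by
      have := mul_le_mul (hXR x hx) (hDgN 0 h0X).le (by positivity) hR.le
      linarith [hfg x hx, hgN x hx, hgN 0 h0X]
    _ = ε := by rw [hδ]; field_simp; ring

/-- Theorem 1 (approximation capacity of the "Jacobian" QRnet architecture). -/
theorem stmt_2 {n d : ℕ} (X : Set (Fin n → ℝ)) (hX : IsCompact X)
    (h0 : (0 : Fin n → ℝ) ∈ interior X)
    (f : (Fin n → ℝ) → (Fin d → ℝ))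
    (hf : ContinuousOn f X) (hf0 : f 0 = 0)
    (hf1 : ∃ U ∈ nhds (0 : Fin n → ℝ), ContDiffOn ℝ 1 f U)
    (S : Set ((Fin n → ℝ) → (Fin d → ℝ)))
    (hS : ∀ N ∈ S, ContDiff ℝ 1 N)
    (hUA : ∀ g : (Fin n → ℝ) → (Fin d → ℝ), ContDiff ℝ 1 g → ∀ δ > 0,
      ∃ N ∈ S, (∀ x ∈ X, ∑ i, |g x i - N x i| < δ) ∧
        (∀ x ∈ X, ∑ i, ∑ j, |fderiv ℝ g x (Pi.single j 1) i
          - fderiv ℝ N x (Pi.single j 1) i| < δ))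
    (ε : ℝ) (hε : 0 < ε) :
    ∃ N ∈ S, ∀ x ∈ X,
      ∑ i, |f x i - ((fderiv ℝ f 0 x i - fderiv ℝ N 0 x i)
        + N x i - N 0 i)| < ε :=
  stmt_2_general X hX h0 f hf hf0 hf1 S hUA ε hε
end

section
/- Let X ⊂ ℝⁿ be compact, star-shaped with respect to 0, with 0 in its interior, and let f : X → ℝᵈ be continuous with f(0) = 0 and f continuously differentiable on a neighborhood of 0. Then for every ε > 0 there exists a continuous function h : X → ℝ^{d×n} with h(0) = 0 such that sup_{x ∈ X} ‖f(x) − [Df(0) + h(x)]x‖₁ < ε, where ‖·‖₁ is the ℓ¹ norm on ℝᵈ. -/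
/-!
The remainder `g x = f x - Df(0) x` is reproduced exactly by the rank-one matrix
`h x = g(x) xᵀ / |x|²`, so the error is zero. Continuity of `h` away from `0` is clear, and at `0`
every entry of `h x` is bounded by `‖g x‖ / ‖x‖`, which tends to `0` because `g x = o(x)`.
-/

open Asymptotics Matrix Filter Topology

variable {α m n : Type*} [Fintype n]

theorem dotProduct_self_nonneg (x : n → ℝ) : 0 ≤ x ⬝ᵥ x :=
  Finset.sum_nonneg fun i _ => mul_self_nonneg (x i)

theorem sq_norm_le_dotProduct_self (x : n → ℝ) : ‖x‖ ^ 2 ≤ x ⬝ᵥ x := by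
  have hcoord (i : n) : x i ^ 2 ≤ x ⬝ᵥ x := by
    rw [sq]
    exact Finset.single_le_sum (f := fun j => x j * x j) (fun j _ => mul_self_nonneg (x j))
      (Finset.mem_univ i)
  have hnorm : ‖x‖ ≤ √(x ⬝ᵥ x) :=
    (pi_norm_le_iff_of_nonneg (Real.sqrt_nonneg _)).2 fun i => Real.abs_le_sqrt (hcoord i)
  exact (Real.le_sqrt (norm_nonneg x) (dotProduct_self_nonneg x)).1 hnorm

/-- At `x = 0` this is `0`, since `(0 : ℝ)⁻¹ = 0`. -/
noncomputable def outerDiv (v : m → ℝ) (x : n → ℝ) : Matrix m n ℝ := (x ⬝ᵥ x)⁻¹ • vecMulVec v x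

theorem continuousAt_outerDiv {v : m → ℝ} {x : n → ℝ} (hx : x ≠ 0) :
    ContinuousAt (fun p : (m → ℝ) × (n → ℝ) => outerDiv p.1 p.2) (v, x) := by
  have hdot : Continuous fun p : (m → ℝ) × (n → ℝ) => p.2 ⬝ᵥ p.2 :=
    continuous_snd.dotProduct continuous_snd
  exact (hdot.continuousAt.inv₀ (dotProduct_self_eq_zero.not.2 hx)).smul
    (continuous_fst.matrix_vecMulVec continuous_snd).continuousAt

theorem ContinuousWithinAt.outerDiv [TopologicalSpace α] {s : Set α} {a : α} {v : α → m → ℝ}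
    {x : α → n → ℝ}
    (hv : ContinuousWithinAt v s a) (hx : ContinuousWithinAt x s a) (ha : x a ≠ 0) :
    ContinuousWithinAt (fun b => outerDiv (v b) (x b)) s a :=
  (continuousAt_outerDiv ha).comp_continuousWithinAt (f := fun b => (v b, x b)) (hv.prodMk hx)

theorem outerDiv_mulVec (v : m → ℝ) {x : n → ℝ} (hx : x ≠ 0) : outerDiv v x *ᵥ x = v := by
  rw [outerDiv, smul_mulVec, vecMulVec_mulVec, op_smul_eq_smul, smul_smul,
    inv_mul_cancel₀ (dotProduct_self_eq_zero.not.2 hx), one_smul]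

@[simp] theorem outerDiv_zero_right (v : m → ℝ) : outerDiv v (0 : n → ℝ) = 0 := by
  simp [outerDiv]

theorem abs_outerDiv_apply_le [Fintype m] (v : m → ℝ) (x : n → ℝ) (i : m) (j : n) :
    |outerDiv v x i j| ≤ ‖v‖ / ‖x‖ := by
  rcases eq_or_ne x 0 with rfl | hx
  · simp
  have hx' : 0 < ‖x‖ := norm_pos_iff.2 hx
  calc |outerDiv v x i j| = |v i| * |x j| / (x ⬝ᵥ x) := by
        rw [outerDiv, Matrix.smul_apply, vecMulVec_apply, smul_eq_mul, abs_mul, abs_mul,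
          abs_inv, abs_of_nonneg (dotProduct_self_nonneg x), inv_mul_eq_div]
    _ ≤ ‖v‖ * ‖x‖ / ‖x‖ ^ 2 :=
        div_le_div₀ (by positivity) (mul_le_mul (norm_le_pi_norm v i) (norm_le_pi_norm x j)
          (abs_nonneg _) (norm_nonneg _)) (by positivity) (sq_norm_le_dotProduct_self x)
    _ = ‖v‖ / ‖x‖ := by field_simp

theorem Asymptotics.IsLittleO.tendsto_outerDiv [Fintype m] {l : Filter α} {v : α → m → ℝ}
    {x : α → n → ℝ} (h : v =o[l] x) : Tendsto (fun a => outerDiv (v a) (x a)) l (𝓝 0) := by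
  refine tendsto_pi_nhds.2 fun i => tendsto_pi_nhds.2 fun j => ?_
  refine isLittleO_one_iff (F := ℝ) |>.1 <| isLittleO_iff.2 fun c hc => ?_
  filter_upwards [h.def hc] with a ha
  rw [norm_one, mul_one, Real.norm_eq_abs]
  exact (abs_outerDiv_apply_le _ _ i j).trans (div_le_of_le_mul₀ (norm_nonneg _) hc.le ha)

theorem stmt_5_general {n d : ℕ} (X : Set (Fin n → ℝ))
    (f : (Fin n → ℝ) → (Fin d → ℝ))
    (hf : ContinuousOn f X) (hf0 : f 0 = 0)
    (hf1 : ∃ U ∈ nhds (0 : Fin n → ℝ), ContDiffOn ℝ 1 f U)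
    (ε : ℝ) (hε : 0 < ε) :
    ∃ h : (Fin n → ℝ) → Matrix (Fin d) (Fin n) ℝ,
      ContinuousOn h X ∧ h 0 = 0 ∧
      ∀ x ∈ X, ∑ i, |f x i - (fderiv ℝ f 0 x i + ((h x).mulVec x) i)| < ε := by
  obtain ⟨U, hU, hfU⟩ := hf1
  set L := fderiv ℝ f 0
  have hL : HasFDerivAt f L 0 := ((hfU.contDiffAt hU).differentiableAt one_ne_zero).hasFDerivAt
  have hremainder : (fun x => f x - L x) =o[𝓝 0] fun x => x := by
    simpa [hf0] using hasFDerivAt_iff_isLittleO_nhds_zero.1 hL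
  refine ⟨fun x => outerDiv (f x - L x) x, fun x hx => ?_, outerDiv_zero_right _, fun x _ => ?_⟩
  · rcases eq_or_ne x 0 with rfl | hx0
    · simpa [ContinuousWithinAt] using hremainder.tendsto_outerDiv.mono_left nhdsWithin_le_nhds
    · exact ((hf x hx).sub L.continuous.continuousWithinAt).outerDiv continuousWithinAt_id hx0
  · rcases eq_or_ne x 0 with rfl | hx0
    · simpa [hf0] using hε
    · simpa [outerDiv_mulVec _ hx0] using hε

/-- Key step in the proof of Theorem 2: continuous matrix-valued h with h(0)=0
approximating f(x) − Df(0)x as h(x)·x, uniformly on X. -/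
theorem stmt_5 {n d : ℕ} (X : Set (Fin n → ℝ)) (hX : IsCompact X)
    (hstar : ∀ x ∈ X, ∀ s : ℝ, s ∈ Set.Icc (0 : ℝ) 1 → s • x ∈ X)
    (h0 : (0 : Fin n → ℝ) ∈ interior X)
    (f : (Fin n → ℝ) → (Fin d → ℝ))
    (hf : ContinuousOn f X) (hf0 : f 0 = 0)
    (hf1 : ∃ U ∈ nhds (0 : Fin n → ℝ), ContDiffOn ℝ 1 f U)
    (ε : ℝ) (hε : 0 < ε) :
    ∃ h : (Fin n → ℝ) → Matrix (Fin d) (Fin n) ℝ,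
      ContinuousOn h X ∧ h 0 = 0 ∧
      ∀ x ∈ X, ∑ i, |f x i - (fderiv ℝ f 0 x i + ((h x).mulVec x) i)| < ε :=
  stmt_5_general X f hf hf0 hf1 ε hε
end
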